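/- Let n be a positive integer, let y ∈ ℝⁿ, let X be an n×p real matrix whose j-th column x_j satisfies ‖x_j‖₂² = n, let λ > 0, and let β ∈ ℝᵖ be a vector whose j-th component is zero. Set z = n⁻¹ (y − Xβ)ᵀ x_j. Then the univariate function t ↦ (2n)⁻¹‖y − X(β + t e_j)‖₂² + Σ_{k=1}^p p_{H₀,λ}(|β_k + t·1{k=j}|) (where e_j is the j-th standard basis vector) attains its global minimum over t ∈ ℝ at t̂ = z·1{|z| > λ}. -/
import Mathlib


/-- The `L₀` penalty `p_{H₀,λ}(t) = (λ²/2)·1{t ≠ 0}`. -/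
noncomputable def l0Penalty (lam t : ℝ) : ℝ := if t ≠ 0 then lam ^ 2 / 2 else 0

lemma scalar_key (lam z t : ℝ) (hlam : 0 < lam) :
    (if lam < |z| then z else 0) ^ 2 / 2 - (if lam < |z| then z else 0) * z
        + l0Penalty lam |if lam < |z| then z else 0|
      ≤ t ^ 2 / 2 - t * z + l0Penalty lam |t| := by
  unfold l0Penalty
  by_cases hz : lam < |z|
  · have hz0 : z ≠ 0 := by
      intro h; rw [h] at hz; simp at hz; linarith
    by_cases ht : t = 0
    · simp [hz, hz0, ht]
      nlinarith [sq_abs z, abs_nonneg z]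
    · simp [hz, hz0, ht]
      nlinarith [sq_nonneg (t - z)]
  · by_cases ht : t = 0
    · simp [hz, ht]
    · simp [hz, ht]
      have h1 : |z| ≤ lam := le_of_not_gt hz
      have h2 : t * z ≤ |t| * lam := by
        calc t * z ≤ |t * z| := le_abs_self _
        _ = |t| * |z| := abs_mul t z
        _ ≤ |t| * lam := mul_le_mul_of_nonneg_left h1 (abs_nonneg t)
      nlinarith [sq_abs t, sq_nonneg (|t| - lam)]

/-- Minimizing the `L₀`-penalized least squares along one coordinate
gives the hard-thresholding rule `ẑ = z·1{|z| > λ}`. -/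
theorem univariate_hard_thresholding_l0_penalty
    (n p : ℕ) (hn : 0 < n) (y : Fin n → ℝ) (X : Matrix (Fin n) (Fin p) ℝ)
    (j : Fin p) (hcol : ∑ i, (X i j) ^ 2 = (n : ℝ))
    (lam : ℝ) (hlam : 0 < lam) (β : Fin p → ℝ) (hβj : β j = 0) :
    ∀ t : ℝ,
      (fun t : ℝ =>
          (2 * (n : ℝ))⁻¹ *
              ∑ i, (y i - ∑ k, X i k * (β k + if k = j then t else 0)) ^ 2 +
            ∑ k, l0Penalty lam |β k + if k = j then t else 0|)
        (if lam < |(n : ℝ)⁻¹ * ∑ i, (y i - ∑ k, X i k * β k) * X i j|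
          then (n : ℝ)⁻¹ * ∑ i, (y i - ∑ k, X i k * β k) * X i j else 0) ≤
      (fun t : ℝ =>
          (2 * (n : ℝ))⁻¹ *
              ∑ i, (y i - ∑ k, X i k * (β k + if k = j then t else 0)) ^ 2 +
            ∑ k, l0Penalty lam |β k + if k = j then t else 0|) t := by
  intro t
  simp only []
  set r : Fin n → ℝ := fun i => y i - ∑ k, X i k * β k with hr
  set z : ℝ := (n : ℝ)⁻¹ * ∑ i, r i * X i j with hz
  have hne : (n : ℝ) ≠ 0 := Nat.cast_ne_zero.mpr hn.ne'
  have key : ∀ s : ℝ,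
      (2 * (n : ℝ))⁻¹ * ∑ i, (y i - ∑ k, X i k * (β k + if k = j then s else 0)) ^ 2
        + ∑ k, l0Penalty lam |β k + if k = j then s else 0|
      = ((2 * (n : ℝ))⁻¹ * ∑ i, r i ^ 2
          + ∑ k ∈ Finset.univ \ {j}, l0Penalty lam |β k|)
        + (s ^ 2 / 2 - s * z + l0Penalty lam |s|) := by
    intro s
    have h1 : ∀ i, y i - ∑ k, X i k * (β k + if k = j then s else 0)
        = r i - X i j * s := by
      intro i
      simp only [hr, mul_add, Finset.sum_add_distrib, mul_ite, mul_zero,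
        Finset.sum_ite_eq', Finset.mem_univ, if_true]
      ring
    have h2 : ∑ i, (y i - ∑ k, X i k * (β k + if k = j then s else 0)) ^ 2
        = ∑ i, r i ^ 2 - 2 * s * (∑ i, r i * X i j) + s ^ 2 * (n : ℝ) := by
      rw [← hcol]
      simp only [h1]
      rw [Finset.mul_sum, Finset.mul_sum, ← Finset.sum_sub_distrib, ← Finset.sum_add_distrib]
      apply Finset.sum_congr rfl
      intro i _
      ring
    have h3 : ∑ k, l0Penalty lam |β k + if k = j then s else 0|
        = ∑ k ∈ Finset.univ \ {j}, l0Penalty lam |β k| + l0Penalty lam |s| := by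
      rw [← Finset.sum_sdiff (Finset.subset_univ {j})]
      congr 1
      · apply Finset.sum_congr rfl
        intro k hk
        have : k ≠ j := by simpa using (Finset.mem_sdiff.mp hk).2
        simp [this]
      · simp [hβj]
    rw [h2, h3, hz]
    field_simp
    ring
  rw [key, key]
  have := scalar_key lam z t hlam
  linarith
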